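/- Let n be a nonnegative integer and let λ be a real number with λ^{n+1} > 2 (equivalently, α = 1/λ < 2^{−1/(n+1)}). If φ : ℝ → ℂ is n-times continuously differentiable with compact support and satisfies φ(x) = (λ/2)(φ(λx − 1) + φ(λx + 1)) for all x ∈ ℝ, then φ is identically zero. In other words, the Bernoulli two-scale equation has no solution in C_c^n(ℝ) \ {0} when α < 2^{−1/(n+1)}. -/

import Mathlib

open Filter Set

/-!
Differentiating the equation `n` times shows that `φ^(n)` satisfies the same equation
with `λ` replaced by `μ = λ^(n+1) > 2`; by induction on `n` it suffices to treat continuous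
compactly supported solutions of `ψ x = (μ/2) (ψ (λx - 1) + ψ (λx + 1))` with `μ > 2`.
If `ψ` vanishes on `(c, ∞)`, the equation at `x` shows that it vanishes on `((c + 1)/λ, ∞)`,
so the infimum `c` of such thresholds satisfies `λc ≤ c + 1`. For `x > c - 2` the term
`ψ (x + 2)` drops out of the equation at `(x + 1)/λ`, leaving `‖ψ x‖ = (2/μ) ‖ψ ((x + 1)/λ)‖`,
and `x ↦ (x + 1)/λ` maps `(c - 2, ∞)` into itself; iterating this contraction forces `ψ = 0`
on `(c - 2, ∞)`, contradicting the choice of `c`.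
-/

theorem eqOn_zero_of_norm_le_mul_norm_comp {α E : Type*} [NormedAddCommGroup E] {ψ : α → E}
    {S : Set α} {g : α → α} {q M : ℝ} (hg : MapsTo g S S) (hq₀ : 0 ≤ q) (hq₁ : q < 1)
    (hM : ∀ x ∈ S, ‖ψ x‖ ≤ M) (h : ∀ x ∈ S, ‖ψ x‖ ≤ q * ‖ψ (g x)‖) : EqOn ψ 0 S := by
  have hpow : ∀ k : ℕ, ∀ x ∈ S, ‖ψ x‖ ≤ q ^ k * M := by
    intro k
    induction k with
    | zero => simpa using hM
    | succ k ih =>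
      intro x hx
      calc ‖ψ x‖ ≤ q * ‖ψ (g x)‖ := h x hx
        _ ≤ q * (q ^ k * M) := by gcongr; exact ih _ (hg hx)
        _ = q ^ (k + 1) * M := by ring
  have hlim : Tendsto (fun k : ℕ ↦ q ^ k * M) atTop (nhds 0) := by
    simpa using (tendsto_pow_atTop_nhds_zero_of_lt_one hq₀ hq₁).mul_const M
  intro x hx
  exact norm_le_zero_iff.1 (ge_of_tendsto' hlim fun k ↦ hpow k x hx)

theorem HasCompactSupport.eq_zero_of_deriv_eq_zero {𝕜 E : Type*} [RCLike 𝕜]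
    [NormedAddCommGroup E] [NormedSpace 𝕜 E] {f : 𝕜 → E} (hsupp : HasCompactSupport f)
    (hf : Differentiable 𝕜 f) (hf' : deriv f = 0) : f = 0 := by
  obtain ⟨y, hy⟩ := (ne_univ_iff_exists_notMem _).1 hsupp.ne_univ
  funext x
  rw [is_const_of_deriv_eq_zero hf (congrFun hf') x y]
  exact image_eq_zero_of_notMem_tsupport hy

section TwoScale

variable {E : Type*} [NormedAddCommGroup E] [NormedSpace ℝ E] {lam μ c : ℝ} {ψ : ℝ → E}

def IsTwoScaleSolution (lam μ : ℝ) (ψ : ℝ → E) : Prop :=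
  ∀ x, ψ x = (μ / 2) • (ψ (lam * x - 1) + ψ (lam * x + 1))

namespace IsTwoScaleSolution

theorem deriv (h : IsTwoScaleSolution lam μ ψ) (hψ : Differentiable ℝ ψ) :
    IsTwoScaleSolution lam (μ * lam) (deriv ψ) := by
  intro x
  have hleft : HasDerivAt (fun x ↦ ψ (lam * x - 1)) (lam • _root_.deriv ψ (lam * x - 1)) x := by
    simpa [Function.comp_def] using
      (hψ _).hasDerivAt.scomp x (((hasDerivAt_id' x).const_mul lam).sub_const 1)
  have hright : HasDerivAt (fun x ↦ ψ (lam * x + 1)) (lam • _root_.deriv ψ (lam * x + 1)) x := by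
    simpa [Function.comp_def] using
      (hψ _).hasDerivAt.scomp x (((hasDerivAt_id' x).const_mul lam).add_const 1)
  have hψx : HasDerivAt ψ ((μ / 2) • (lam • _root_.deriv ψ (lam * x - 1)
      + lam • _root_.deriv ψ (lam * x + 1))) x := by
    convert (hleft.fun_add hright).fun_const_smul (μ / 2) using 1
    exact funext h
  rw [hψx.deriv, ← smul_add, smul_smul]
  congr 1
  ring

theorem eqOn_Ioi_div (h : IsTwoScaleSolution lam μ ψ) (hlam : 0 < lam)
    (hc : EqOn ψ 0 (Ioi c)) : EqOn ψ 0 (Ioi ((c + 1) / lam)) := by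
  intro x hx
  rw [mem_Ioi, div_lt_iff₀ hlam] at hx
  rw [h x, hc (show c < lam * x - 1 by linarith), hc (show c < lam * x + 1 by linarith)]
  simp

theorem eqOn_Ioi_sub_two (h : IsTwoScaleSolution lam μ ψ) (hlam : 1 ≤ lam) (hμ : 2 < μ)
    {M : ℝ} (hM : ∀ x, ‖ψ x‖ ≤ M) (hc : lam * c ≤ c + 1) (hc0 : EqOn ψ 0 (Ioi c)) :
    EqOn ψ 0 (Ioi (c - 2)) := by
  have hlam0 : 0 < lam := by linarith
  refine eqOn_zero_of_norm_le_mul_norm_comp (g := fun x ↦ (x + 1) / lam) (q := 2 / μ)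
    ?_ (by positivity) ((div_lt_one (by linarith)).2 hμ) (fun x _ ↦ hM x) ?_
  · intro x hx
    rw [mem_Ioi] at hx ⊢
    rw [lt_div_iff₀ hlam0]
    nlinarith
  · intro x hx
    have h2 : ψ (x + 2) = 0 := hc0 (show c < x + 2 by rw [mem_Ioi] at hx; linarith)
    have hx' : ψ ((x + 1) / lam) = (μ / 2) • ψ x := by
      rw [h, mul_div_cancel₀ _ hlam0.ne', add_sub_cancel_right, add_assoc, one_add_one_eq_two,
        h2, add_zero]
    rw [hx', norm_smul, Real.norm_of_nonneg (by linarith), ← mul_assoc,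
      div_mul_div_cancel₀ (by linarith), div_self two_ne_zero, one_mul]

theorem eq_zero_of_bounded (h : IsTwoScaleSolution lam μ ψ) (hlam : 1 ≤ lam) (hμ : 2 < μ)
    {M : ℝ} (hM : ∀ x, ‖ψ x‖ ≤ M) (hR : ∀ᶠ x in atTop, ψ x = 0) : ψ = 0 := by
  set T := {c : ℝ | EqOn ψ 0 (Ioi c)}
  obtain ⟨R, hR⟩ := eventually_atTop.1 hR
  have hRT : R ∈ T := fun x hx ↦ hR x (le_of_lt hx)
  by_cases hT : BddBelow T
  · exfalso
    have hcT : sInf T ∈ T := fun x hx ↦ by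
      obtain ⟨d, hdT, hdx⟩ := exists_lt_of_csInf_lt ⟨R, hRT⟩ hx
      exact hdT hdx
    have hfix : lam * sInf T ≤ sInf T + 1 := by
      have := csInf_le hT (h.eqOn_Ioi_div (by linarith) hcT)
      rwa [le_div_iff₀ (by linarith), mul_comm] at this
    have := csInf_le hT (h.eqOn_Ioi_sub_two hlam hμ hM hfix hcT)
    linarith
  · funext x
    obtain ⟨c, hcT, hcx⟩ := not_bddBelow_iff.1 hT x
    exact hcT hcx

theorem eq_zero_of_contDiff (n : ℕ) (h : IsTwoScaleSolution lam μ ψ) (hψ : ContDiff ℝ n ψ)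
    (hsupp : HasCompactSupport ψ) (hlam : 1 ≤ lam) (hμ : 2 < μ * lam ^ n) : ψ = 0 := by
  induction n generalizing μ ψ with
  | zero =>
    obtain ⟨M, hM⟩ := hsupp.exists_bound_of_continuous hψ.continuous
    have hR : ∀ᶠ x in atTop, ψ x = 0 :=
      (hasCompactSupport_iff_eventuallyEq.1 hsupp).filter_mono
        (atTop_le_cocompact.trans coclosedCompact_eq_cocompact.ge)
    exact h.eq_zero_of_bounded hlam (by simpa using hμ) hM hR
  | succ n ih =>
    have hψ' : ContDiff ℝ (n + 1) ψ := by exact_mod_cast hψ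
    have hd : Differentiable ℝ ψ := hψ'.differentiable (by simp)
    refine hsupp.eq_zero_of_deriv_eq_zero hd
      (ih (h.deriv hd) (contDiff_succ_iff_deriv.1 hψ').2.2 hsupp.deriv ?_)
    rwa [mul_assoc, ← pow_succ']

end IsTwoScaleSolution

end TwoScale

/-- The Bernoulli two-scale equation `φ(x) = (λ/2)(φ(λx - 1) + φ(λx + 1))` has no nonzero
solution in `C_c^n(ℝ)` when `λ^(n+1) > 2` (i.e. `α = 1/λ < 2^(-1/(n+1))`). -/
theorem bernoulli_two_scale_no_Cn_solution (n : ℕ) (lam : ℝ) (hlam : 1 < lam)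
    (hpow : 2 < lam ^ (n + 1))
    (φ : ℝ → ℂ) (hreg : ContDiff ℝ n φ) (hsupp : HasCompactSupport φ)
    (heq : ∀ x : ℝ, φ x = ((lam : ℂ) / 2) * (φ (lam * x - 1) + φ (lam * x + 1))) :
    φ = 0 := by
  have hsol : IsTwoScaleSolution lam lam φ := fun x ↦ by
    rw [heq x, Complex.real_smul]
    push_cast
    rfl
  exact hsol.eq_zero_of_contDiff n hreg hsupp hlam.le (by rwa [← pow_succ'])
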